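/- arXiv:1506.01556 — 3 statements merged into one kernel-verified Lean document; each statement's English description precedes it below -/
import Mathlib

section
/- Let H be a real Hilbert space and A : H → H be monotone and β-Lipschitz continuous. Then the resolvent J_A = (Id + A)^{-1} satisfies 2⟨J_Ax − J_Ay, x − y⟩ ≥ ‖x − y‖² + (1 − β²)‖J_Ax − J_Ay‖² for all x, y ∈ H. -/
/-! Writing `a = J x - J y` and `b = A (J x) - A (J y)`, the resolvent equation gives
`x - y = a + b`, and the polarization-type identity `2⟪a, a + b⟫ - ‖a + b‖² = ‖a‖² - ‖b‖²`
reduces the claim to `‖b‖² ≤ β² ‖a‖²`, which is the Lipschitz bound squared. -/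

open RealInnerProductSpace

theorem two_inner_self_add_sub_norm_add_sq {H : Type*} [NormedAddCommGroup H]
    [InnerProductSpace ℝ H] (a b : H) :
    2 * ⟪a, a + b⟫ - ‖a + b‖ ^ 2 = ‖a‖ ^ 2 - ‖b‖ ^ 2 := by
  rw [norm_add_sq_real, inner_add_right, real_inner_self_eq_norm_sq]
  ring

theorem sub_eq_resolvent_sub_add {G : Type*} [AddCommGroup G] {A J : G → G}
    (hJ : ∀ x : G, J x + A (J x) = x) (x y : G) :
    x - y = (J x - J y) + (A (J x) - A (J y)) := by
  conv_lhs => rw [← hJ x, ← hJ y]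
  abel

theorem norm_sub_sq_le_of_lipschitz {E : Type*} [SeminormedAddCommGroup E] {A : E → E}
    {β : ℝ}
    (hlip : ∀ x y : E, ‖A x - A y‖ ≤ β * ‖x - y‖) (x y : E) :
    ‖A x - A y‖ ^ 2 ≤ β ^ 2 * ‖x - y‖ ^ 2 := by
  rw [← mul_pow]
  exact pow_le_pow_left₀ (norm_nonneg _) (hlip x y) 2

theorem resolvent_of_monotone_lipschitz_general
    {H : Type*} [NormedAddCommGroup H] [InnerProductSpace ℝ H]
    (β : ℝ) (A J : H → H)
    (hlip : ∀ x y : H, ‖A x - A y‖ ≤ β * ‖x - y‖)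
    (hJ : ∀ x : H, J x + A (J x) = x) :
    ∀ x y : H,
      2 * ⟪J x - J y, x - y⟫ ≥
        ‖x - y‖ ^ 2 + (1 - β ^ 2) * ‖J x - J y‖ ^ 2 := by
  intro x y
  have hidentity := two_inner_self_add_sub_norm_add_sq (J x - J y) (A (J x) - A (J y))
  rw [← sub_eq_resolvent_sub_add hJ] at hidentity
  have hbound := norm_sub_sq_le_of_lipschitz hlip (J x) (J y)
  linarith

theorem resolvent_of_monotone_lipschitz
    {H : Type*} [NormedAddCommGroup H] [InnerProductSpace ℝ H]
    (β : ℝ) (A J : H → H)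
    (hmono : ∀ x y : H, (0 : ℝ) ≤ ⟪A x - A y, x - y⟫)
    (hlip : ∀ x y : H, ‖A x - A y‖ ≤ β * ‖x - y‖)
    (hJ : ∀ x : H, J x + A (J x) = x) :
    ∀ x y : H,
      2 * ⟪J x - J y, x - y⟫ ≥
        ‖x - y‖ ^ 2 + (1 - β ^ 2) * ‖J x - J y‖ ^ 2 :=
  resolvent_of_monotone_lipschitz_general β A J hlip hJ
end

section
/- Let H be a real Hilbert space and A : H → H be σ-strongly monotone and (1/β)-cocoercive with 0 < σ ≤ β. Then the reflected resolvent R_A = 2J_A − Id is δ-contractive with δ = √(1 − 4σ/(1 + 2σ + σβ)). -/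
/-!
With `u = J x - J y` and `v = A (J x) - A (J y)` the resolvent equation gives `x - y = u + v` and
`R x - R y = u - v`, so `‖R x - R y‖² = ‖x - y‖² - 4⟪u, v⟫`. Strong monotonicity and cocoercivity
bound `σ (‖u‖² + ‖v‖²) ≤ (1 + σβ)⟪u, v⟫`, i.e. `4σ‖x - y‖² ≤ 4(1 + 2σ + σβ)⟪u, v⟫`, which is
exactly the claimed contraction.
-/

open RealInnerProductSpace

theorem norm_sub_sq_le_of_inner_lower_bounds {H : Type*} [NormedAddCommGroup H]
    [InnerProductSpace ℝ H] {σ β : ℝ} (hσ : 0 ≤ σ) (hβ : 0 ≤ β) {u v : H}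
    (hu : σ * ‖u‖ ^ 2 ≤ ⟪v, u⟫) (hv : ‖v‖ ^ 2 ≤ β * ⟪v, u⟫) :
    ‖u - v‖ ^ 2 ≤ (1 - 4 * σ / (1 + 2 * σ + σ * β)) * ‖u + v‖ ^ 2 := by
  have hD : 0 < 1 + 2 * σ + σ * β := by positivity
  have hσv : σ * ‖v‖ ^ 2 ≤ σ * β * ⟪v, u⟫ := by
    rw [mul_assoc]; exact mul_le_mul_of_nonneg_left hv hσ
  rw [one_sub_div hD.ne', div_mul_eq_mul_div, le_div_iff₀ hD, norm_sub_sq_real, norm_add_sq_real,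
    real_inner_comm]
  linarith

section

variable {H : Type*} [AddCommGroup H]

theorem sub_eq_add_of_resolvent {A J : H → H} (hJ : ∀ x, J x + A (J x) = x) (x y : H) :
    x - y = (J x - J y) + (A (J x) - A (J y)) := by
  linear_combination (norm := abel) hJ y - hJ x

theorem reflection_sub_eq_sub_of_resolvent [Module ℝ H] {A J : H → H}
    (hJ : ∀ x, J x + A (J x) = x) (x y : H) :
    ((2 : ℝ) • J x - x) - ((2 : ℝ) • J y - y) = (J x - J y) - (A (J x) - A (J y)) := by
  linear_combination (norm := module) hJ x - hJ y

end

theorem Real.le_sqrt_mul_of_sq_le_mul_sq {a b c : ℝ} (hb : 0 ≤ b)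
    (h : a ^ 2 ≤ c * b ^ 2) : a ≤ √c * b := by
  rw [← Real.sqrt_sq hb, ← Real.sqrt_mul' c (sq_nonneg b)]
  exact Real.le_sqrt_of_sq_le h

theorem reflected_resolvent_contraction_sm_cocoercive
    {H : Type*} [NormedAddCommGroup H] [InnerProductSpace ℝ H]
    (σ β : ℝ) (hσ : 0 < σ) (hσβ : σ ≤ β)
    (A J : H → H)
    (hsm : ∀ x y : H, ⟪A x - A y, x - y⟫ ≥ σ * ‖x - y‖ ^ 2)
    (hcoco : ∀ x y : H, ⟪A x - A y, x - y⟫ ≥ (1 / β) * ‖A x - A y‖ ^ 2)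
    (hJ : ∀ x : H, J x + A (J x) = x) :
    (∀ x y : H, ‖((2 : ℝ) • J x - x) - ((2 : ℝ) • J y - y)‖ ≤
      Real.sqrt (1 - 4 * σ / (1 + 2 * σ + σ * β)) * ‖x - y‖) ∧
    Real.sqrt (1 - 4 * σ / (1 + 2 * σ + σ * β)) < 1 := by
  have hβ : 0 < β := hσ.trans_le hσβ
  refine ⟨fun x y => ?_, ?_⟩
  · have hv : ‖A (J x) - A (J y)‖ ^ 2 ≤ β * ⟪A (J x) - A (J y), J x - J y⟫ := by
      rw [← inv_mul_le_iff₀ hβ, ← one_div]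
      exact hcoco (J x) (J y)
    rw [reflection_sub_eq_sub_of_resolvent hJ, sub_eq_add_of_resolvent hJ x y]
    exact Real.le_sqrt_mul_of_sq_le_mul_sq (norm_nonneg _)
      (norm_sub_sq_le_of_inner_lower_bounds hσ.le hβ.le (hsm (J x) (J y)) hv)
  · rw [Real.sqrt_lt' one_pos, one_pow, sub_lt_self_iff]
    positivity
end

section
/- For 0 < σ ≤ β, the function h(γ) = 1 − 4γσ/(1 + 2γσ + γ²σβ) on (0,∞) is minimized at γ = 1/√(βσ), and the minimum value is (√(β/σ) − 1)/(√(β/σ) + 1). -/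
/-!
Dividing by `γ`, `4γσ / (1 + 2γσ + γ²σβ) = 4σ / (1/γ + 2σ + γσβ)`, and by AM-GM
`1/γ + γσβ ≥ 2√(βσ)` with equality exactly at `γ = 1/√(βσ)`. So `h` is minimal there, with value
`1 - 2σ / (√(βσ) + σ) = (√(βσ) - σ) / (√(βσ) + σ)`; dividing through by `σ` gives the closed form.
-/

noncomputable def reflectedResolventContractionSq (σ β γ : ℝ) : ℝ :=
  1 - 4 * γ * σ / (1 + 2 * γ * σ + γ ^ 2 * σ * β)

section
variable {σ β : ℝ}

lemma sqrt_mul_div_self (hσ : 0 < σ) (β : ℝ) : Real.sqrt (β * σ) / σ = Real.sqrt (β / σ) := by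
  rw [← Real.sqrt_sq hσ.le, ← Real.sqrt_div' _ (sq_nonneg σ), Real.sqrt_sq hσ.le]
  congr 1
  field_simp

lemma reflectedResolventContractionSq_inv_sqrt (hσ : 0 < σ) (hβ : 0 < β) :
    reflectedResolventContractionSq σ β (1 / Real.sqrt (β * σ)) =
      1 - 2 * σ / (Real.sqrt (β * σ) + σ) := by
  have hs : 0 < Real.sqrt (β * σ) := by positivity
  have hs2 : Real.sqrt (β * σ) ^ 2 = β * σ := Real.sq_sqrt (by positivity)
  rw [reflectedResolventContractionSq]
  field_simp
  linear_combination (-2 * σ) * hs2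

lemma one_sub_two_mul_div_sqrt_add (hσ : 0 < σ) (β : ℝ) :
    1 - 2 * σ / (Real.sqrt (β * σ) + σ) = (Real.sqrt (β / σ) - 1) / (Real.sqrt (β / σ) + 1) := by
  rw [← sqrt_mul_div_self hσ]
  have hs : 0 ≤ Real.sqrt (β * σ) := Real.sqrt_nonneg _
  field_simp
  ring

lemma four_mul_div_le_two_mul_div (hσ : 0 < σ) (hβ : 0 ≤ β) {γ : ℝ} (hγ : 0 < γ) :
    4 * γ * σ / (1 + 2 * γ * σ + γ ^ 2 * σ * β) ≤ 2 * σ / (Real.sqrt (β * σ) + σ) := by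
  have hs2 : Real.sqrt (β * σ) ^ 2 = β * σ := Real.sq_sqrt (by positivity)
  rw [div_le_div_iff₀ (by positivity) (by positivity)]
  have hgap : 2 * σ * (1 + 2 * γ * σ + γ ^ 2 * σ * β) - 4 * γ * σ * (Real.sqrt (β * σ) + σ) =
      2 * σ * (1 - γ * Real.sqrt (β * σ)) ^ 2 := by
    linear_combination (-2 * σ * γ ^ 2) * hs2
  linarith [mul_nonneg (by positivity : (0 : ℝ) ≤ 2 * σ) (sq_nonneg (1 - γ * Real.sqrt (β * σ)))]

lemma reflectedResolventContractionSq_inv_sqrt_le (hσ : 0 < σ) (hβ : 0 < β) {γ : ℝ} (hγ : 0 < γ) :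
    reflectedResolventContractionSq σ β (1 / Real.sqrt (β * σ)) ≤
      reflectedResolventContractionSq σ β γ := by
  rw [reflectedResolventContractionSq_inv_sqrt hσ hβ, reflectedResolventContractionSq]
  linarith [four_mul_div_le_two_mul_div hσ hβ.le hγ]

end

theorem optimal_gamma_sm_cocoercive (σ β : ℝ) (hσ : 0 < σ) (hσβ : σ ≤ β) :
    (∀ γ : ℝ, 0 < γ →
      1 - 4 * (1 / Real.sqrt (β * σ)) * σ /
          (1 + 2 * (1 / Real.sqrt (β * σ)) * σ + (1 / Real.sqrt (β * σ)) ^ 2 * σ * β) ≤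
        1 - 4 * γ * σ / (1 + 2 * γ * σ + γ ^ 2 * σ * β)) ∧
    (1 - 4 * (1 / Real.sqrt (β * σ)) * σ /
        (1 + 2 * (1 / Real.sqrt (β * σ)) * σ + (1 / Real.sqrt (β * σ)) ^ 2 * σ * β) =
      (Real.sqrt (β / σ) - 1) / (Real.sqrt (β / σ) + 1)) := by
  have hβ : 0 < β := hσ.trans_le hσβ
  refine ⟨fun γ hγ => reflectedResolventContractionSq_inv_sqrt_le hσ hβ hγ, ?_⟩
  change reflectedResolventContractionSq σ β (1 / Real.sqrt (β * σ)) = _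
  rw [reflectedResolventContractionSq_inv_sqrt hσ hβ, one_sub_two_mul_div_sqrt_add hσ β]
end
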